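/- Let H be a finite simple graph that contains at least one vertex of degree one. If m ≥ 2, then the bondage number of K_m ⊠ H satisfies b(K_m ⊠ H) ≤ ⌈3m/2⌉. -/

import Mathlib

open SimpleGraph Finset

/-- `D` is a dominating set of `G`: every vertex is in `D` or adjacent to a vertex of `D`. -/
def SimpleGraph.IsDominatingSet {V : Type*} (G : SimpleGraph V) (D : Set V) : Prop :=
  ∀ v : V, v ∈ D ∨ ∃ u ∈ D, G.Adj u v

/-- The domination number of a finite graph. -/
noncomputable def SimpleGraph.dominationNumber {V : Type*} [Fintype V]
    (G : SimpleGraph V) : ℕ :=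
  sInf {k | ∃ D : Finset V, D.card = k ∧ G.IsDominatingSet ↑D}

/-- The bondage number of a finite graph: the least size of a set of edges whose removal
increases the domination number. -/
noncomputable def SimpleGraph.bondageNumber {V : Type*} [Fintype V]
    (G : SimpleGraph V) : ℕ :=
  sInf {k | ∃ Z : Finset (Sym2 V), Z.card = k ∧ (↑Z : Set (Sym2 V)) ⊆ G.edgeSet ∧
    G.dominationNumber < (G.deleteEdges ↑Z).dominationNumber}

/-- The strong product of two simple graphs. -/
def SimpleGraph.strongProd {V W : Type*} (G : SimpleGraph V) (H : SimpleGraph W) :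
    SimpleGraph (V × W) :=
  SimpleGraph.fromRel (fun a b =>
    (a.1 = b.1 ∧ H.Adj a.2 b.2) ∨ (G.Adj a.1 b.1 ∧ a.2 = b.2) ∨
      (G.Adj a.1 b.1 ∧ H.Adj a.2 b.2))

infixl:70 " ⊠ " => SimpleGraph.strongProd

/-!
Let `v` be a pendant vertex of `H` with neighbour `u`. Delete the `m` edges `(i, u)(i, v)` and
an edge cover of the clique `K_m × {v}`, which needs `⌈m/2⌉` edges. Since `γ(K_m ⊠ H) ≤ γ(H)`,
it suffices that no set `D` of `γ(H)` vertices dominates what remains. Projecting `D` to `H`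
gives a dominating set of `H`, so the projection is injective on `D` and its image contains at
most one of `u`, `v` (otherwise dropping the pendant `v` gives a smaller one). Only vertices in
the columns of `u` and `v` can dominate the column of `v`, so `D` has exactly one vertex there,
and it has lost its edge to some vertex of the column of `v`: to `(i, v)` if it is `(i, u)`, to its partner in the cover if it is `(i, v)`.
-/

namespace SimpleGraph

variable {V W : Type*}

theorem isDominatingSet_iff {G : SimpleGraph V} {D : Set V} :
    G.IsDominatingSet D ↔ ∀ v, ∃ u ∈ D, u = v ∨ G.Adj u v := by
  refine forall_congr' fun v => ⟨?_, ?_⟩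
  · rintro (hv | ⟨u, hu, huv⟩)
    exacts [⟨v, hv, .inl rfl⟩, ⟨u, hu, .inr huv⟩]
  · rintro ⟨u, hu, rfl | huv⟩
    exacts [.inl hu, .inr ⟨u, hu, huv⟩]

theorem strongProd_adj {G : SimpleGraph V} {H : SimpleGraph W} {a b : V × W} :
    (G ⊠ H).Adj a b ↔ a ≠ b ∧ (a.1 = b.1 ∨ G.Adj a.1 b.1) ∧ (a.2 = b.2 ∨ H.Adj a.2 b.2) := by
  obtain ⟨a₁, a₂⟩ := a
  obtain ⟨b₁, b₂⟩ := b
  simp only [strongProd, fromRel_adj, ne_eq, Prod.mk.injEq, G.adj_comm b₁, H.adj_comm b₂,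
    eq_comm (a := b₁), eq_comm (a := b₂)]
  tauto

theorem dominationNumber_le_card [Fintype V] {G : SimpleGraph V} {D : Finset V}
    (hD : G.IsDominatingSet D) : G.dominationNumber ≤ D.card :=
  Nat.sInf_le ⟨D, rfl, hD⟩

theorem exists_isDominatingSet_card_eq_dominationNumber [Fintype V] (G : SimpleGraph V) :
    ∃ D : Finset V, D.card = G.dominationNumber ∧ G.IsDominatingSet D :=
  Nat.sInf_mem (s := {k | ∃ D : Finset V, D.card = k ∧ G.IsDominatingSet D})
    ⟨_, Finset.univ, rfl, fun v => .inl (Finset.mem_coe.2 (Finset.mem_univ v))⟩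

theorem bondageNumber_le_card [Fintype V] {G : SimpleGraph V} {Z : Finset (Sym2 V)}
    (hZ : (Z : Set (Sym2 V)) ⊆ G.edgeSet)
    (hlt : G.dominationNumber < (G.deleteEdges Z).dominationNumber) :
    G.bondageNumber ≤ Z.card :=
  Nat.sInf_le ⟨Z, rfl, hZ, hlt⟩

theorem isDominatingSet_top_singleton (v : V) : (⊤ : SimpleGraph V).IsDominatingSet {v} :=
  isDominatingSet_iff.2 fun w => ⟨v, rfl, (eq_or_ne v w).imp_right (top_adj v w).2⟩

theorem IsDominatingSet.prod {G : SimpleGraph V} {H : SimpleGraph W} {A : Set V} {B : Set W}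
    (hA : G.IsDominatingSet A) (hB : H.IsDominatingSet B) :
    (G ⊠ H).IsDominatingSet (A ×ˢ B) := by
  refine isDominatingSet_iff.2 fun ⟨x, y⟩ => ?_
  obtain ⟨a, ha, hax⟩ := isDominatingSet_iff.1 hA x
  obtain ⟨b, hb, hby⟩ := isDominatingSet_iff.1 hB y
  refine ⟨(a, b), Set.mk_mem_prod ha hb, ?_⟩
  by_cases hab : (a, b) = (x, y)
  exacts [.inl hab, .inr (strongProd_adj.2 ⟨hab, hax, hby⟩)]

theorem dominationNumber_strongProd_le_mul [Fintype V] [Fintype W] (G : SimpleGraph V)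
    (H : SimpleGraph W) :
    (G ⊠ H).dominationNumber ≤ G.dominationNumber * H.dominationNumber := by
  obtain ⟨A, hAcard, hA⟩ := G.exists_isDominatingSet_card_eq_dominationNumber
  obtain ⟨B, hBcard, hB⟩ := H.exists_isDominatingSet_card_eq_dominationNumber
  rw [← hAcard, ← hBcard, ← Finset.card_product]
  exact dominationNumber_le_card (Finset.coe_product A B ▸ hA.prod hB)

theorem dominationNumber_top_strongProd_le [Fintype V] [Nonempty V] [Fintype W]
    (H : SimpleGraph W) : ((⊤ : SimpleGraph V) ⊠ H).dominationNumber ≤ H.dominationNumber := by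
  have hV : (⊤ : SimpleGraph V).dominationNumber ≤ 1 := by
    simpa using dominationNumber_le_card (D := {Classical.arbitrary V})
      (by simpa using isDominatingSet_top_singleton _)
  simpa using (dominationNumber_strongProd_le_mul ⊤ H).trans (Nat.mul_le_mul_right _ hV)

theorem IsDominatingSet.image_snd [Nonempty V] {G : SimpleGraph V} {H : SimpleGraph W}
    {K : SimpleGraph (V × W)} (hK : K ≤ G ⊠ H) {D : Set (V × W)} (hD : K.IsDominatingSet D) :
    H.IsDominatingSet (Prod.snd '' D) := by
  refine isDominatingSet_iff.2 fun w => ?_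
  obtain ⟨d, hd, rfl | hdw⟩ := isDominatingSet_iff.1 hD (Classical.arbitrary V, w)
  · exact ⟨w, Set.mem_image_of_mem _ hd, .inl rfl⟩
  · exact ⟨d.2, Set.mem_image_of_mem _ hd, (strongProd_adj.1 (hK hdw)).2.2⟩

theorem IsDominatingSet.diff_singleton_of_pendant {H : SimpleGraph W} {S : Set W} {u v : W}
    (hS : H.IsDominatingSet S) (hu : u ∈ S) (huv : H.Adj u v) (hv : ∀ w, H.Adj v w → w = u) :
    H.IsDominatingSet (S \ {v}) := by
  refine isDominatingSet_iff.2 fun w => ?_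
  obtain ⟨s, hs, hsw⟩ := isDominatingSet_iff.1 hS w
  have hu' : u ∈ S \ {v} := ⟨hu, huv.ne⟩
  by_cases hsv : s = v
  · subst hsv
    rcases hsw with rfl | hsw
    exacts [⟨u, hu', .inr huv⟩, ⟨u, hu', .inl (hv w hsw).symm⟩]
  · exact ⟨s, ⟨hs, hsv⟩, hsw⟩

theorem dominationNumber_lt_deleteEdges_strongProd [Fintype V] [Nonempty V] [Fintype W]
    (G : SimpleGraph V) {H : SimpleGraph W} {u v : W} (huv : H.Adj u v)
    (hv : ∀ w, H.Adj v w → w = u) {Z : Set (Sym2 (V × W))}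
    (hZu : ∀ i, s((i, u), (i, v)) ∈ Z) (hZv : ∀ i, ∃ j ≠ i, s((i, v), (j, v)) ∈ Z) :
    H.dominationNumber < ((G ⊠ H).deleteEdges Z).dominationNumber := by
  classical
  set K := (G ⊠ H).deleteEdges Z
  obtain ⟨D, hDcard, hD⟩ := K.exists_isDominatingSet_card_eq_dominationNumber
  rw [← hDcard]
  by_contra! hle
  have hproj : H.IsDominatingSet (D.image Prod.snd) := by
    simpa using hD.image_snd (deleteEdges_le _)
  have hinj : Set.InjOn Prod.snd (D : Set (V × W)) := Finset.card_image_iff.1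
    (Finset.card_image_le.antisymm (hle.trans (dominationNumber_le_card hproj)))
  have hcol : ∀ d i, K.Adj d (i, v) → d.2 = v ∨ d.2 = u := fun d i hd =>
    (strongProd_adj.1 (deleteEdges_le _ hd)).2.2.imp id fun h => hv _ h.symm
  have hnot_both : v ∈ D.image Prod.snd → u ∉ D.image Prod.snd := by
    intro hvD huD
    have hsmaller := dominationNumber_le_card (D := (D.image Prod.snd).erase v)
      (by simpa only [Finset.coe_erase] using hproj.diff_singleton_of_pendant huD huv hv)
    have := Finset.card_erase_of_mem hvD
    have := Finset.card_pos.2 ⟨v, hvD⟩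
    have := D.card_image_le (f := Prod.snd)
    omega
  obtain ⟨a, hav | hau⟩ : ∃ a, (a, v) ∈ D ∨ (a, u) ∈ D := by
    obtain ⟨d, hd, rfl | hdi⟩ := isDominatingSet_iff.1 hD (Classical.arbitrary V, v)
    · exact ⟨_, .inl hd⟩
    · rcases hcol _ _ hdi with hdv | hdu
      exacts [⟨d.1, .inl (by rwa [← hdv])⟩, ⟨d.1, .inr (by rwa [← hdu])⟩]
  · obtain ⟨j, hja, hjZ⟩ := hZv a
    obtain ⟨d, hd, rfl | hdj⟩ := isDominatingSet_iff.1 hD (j, v)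
    · exact hja congr(Prod.fst $(hinj hd hav rfl))
    rcases hcol d j hdj with hdv | hdu
    · obtain rfl := hinj hd hav hdv
      exact (deleteEdges_adj.1 hdj).2 hjZ
    · exact hnot_both (Finset.mem_image_of_mem _ hav) (hdu ▸ Finset.mem_image_of_mem _ hd)
  · obtain ⟨d, hd, rfl | hda⟩ := isDominatingSet_iff.1 hD (a, v)
    · exact hnot_both (Finset.mem_image_of_mem _ hd) (Finset.mem_image_of_mem _ hau)
    rcases hcol d a hda with hdv | hdu
    · exact hnot_both (hdv ▸ Finset.mem_image_of_mem _ hd) (Finset.mem_image_of_mem _ hau)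
    · obtain rfl := hinj hd hau hdu
      exact (deleteEdges_adj.1 hda).2 (hZu a)

theorem map_mem_edgeSet_strongProd {G : SimpleGraph V} (H : SimpleGraph W) {e : Sym2 V}
    (he : e ∈ G.edgeSet) (w : W) : e.map (·, w) ∈ (G ⊠ H).edgeSet := by
  induction e using Sym2.ind with
  | _ x y => exact strongProd_adj.2 ⟨fun h => he.ne congr(Prod.fst $h), .inr he, .inl rfl⟩

theorem exists_edgeCover_top_fin {m : ℕ} (hm : 2 ≤ m) :
    ∃ C : Finset (Sym2 (Fin m)), C.card ≤ (m + 1) / 2 ∧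
      (C : Set (Sym2 (Fin m))) ⊆ (⊤ : SimpleGraph (Fin m)).edgeSet ∧
      ∀ i, ∃ j ≠ i, s(i, j) ∈ C := by
  -- the edges {2k, 2k + 1}, the last one moved down to {m - 2, m - 1} when m is odd
  let lo : ℕ → Fin m := fun k => ⟨min (2 * k) (m - 2), by omega⟩
  let hi : ℕ → Fin m := fun k => ⟨min (2 * k + 1) (m - 1), by omega⟩
  have hlohi : ∀ k, (hi k : ℕ) = lo k + 1 := fun k => by simp only [lo, hi]; omega
  refine ⟨(Finset.range ((m + 1) / 2)).image fun k => s(lo k, hi k),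
    Finset.card_image_le.trans (Finset.card_range _).le, ?_, fun i => ?_⟩
  · simp only [Finset.coe_image, Set.image_subset_iff]
    intro k _
    exact (top_adj _ _).2 fun h => by simpa [hlohi] using congr(Fin.val $h)
  · obtain ⟨k, hk⟩ : ∃ k, (i : ℕ) / 2 = k := ⟨_, rfl⟩
    have hmem := Finset.mem_image_of_mem (fun k => s(lo k, hi k))
      (Finset.mem_range.2 (show k < (m + 1) / 2 by omega))
    have hk_lohi := hlohi k
    rcases (show i = lo k ∨ i = hi k by simp only [Fin.ext_iff, lo, hi]; omega) with rfl | rfl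
    · exact ⟨hi k, fun h => by omega, hmem⟩
    · exact ⟨lo k, fun h => by omega, by rwa [Sym2.eq_swap]⟩

end SimpleGraph

/-- **Lemma.** Let `H` be a finite graph containing at least one vertex of degree one.
If `m ≥ 2`, then `b(K_m ⊠ H) ≤ ⌈3m/2⌉`. -/
theorem bondage_le_of_pendant {W : Type*} [Fintype W] (H : SimpleGraph W)
    [DecidableRel H.Adj] (hpend : ∃ v : W, H.degree v = 1)
    (m : ℕ) (hm : 2 ≤ m) :
    ((⊤ : SimpleGraph (Fin m)) ⊠ H).bondageNumber ≤ (3 * m + 1) / 2 := by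
  classical
  obtain ⟨v, hdeg⟩ := hpend
  obtain ⟨u, hvu, hv⟩ := degree_eq_one_iff_existsUnique_adj.1 hdeg
  obtain ⟨C, hCcard, hCedges, hCcover⟩ := exists_edgeCover_top_fin hm
  have : Nonempty (Fin m) := ⟨⟨0, by omega⟩⟩
  let Z := C.image (Sym2.map (·, v)) ∪ Finset.univ.image fun i => s((i, u), (i, v))
  refine (bondageNumber_le_card (Z := Z) ?_ ?_).trans ?_
  · simp only [Z, Finset.coe_union, Finset.coe_image, Set.union_subset_iff, Set.image_subset_iff]
    refine ⟨fun e he => map_mem_edgeSet_strongProd H (hCedges he) v, fun i _ => ?_⟩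
    exact strongProd_adj.2 ⟨fun h => hvu.ne congr(Prod.snd $h).symm, .inl rfl, .inr hvu.symm⟩
  · refine (dominationNumber_top_strongProd_le H).trans_lt
      (dominationNumber_lt_deleteEdges_strongProd ⊤ hvu.symm hv (fun i => ?_) fun i => ?_)
    · simp [Z]
    · obtain ⟨j, hji, hj⟩ := hCcover i
      exact ⟨j, hji, by simp only [Z, Finset.coe_union, Finset.coe_image]; exact .inl ⟨_, hj, rfl⟩⟩
  · calc Z.card ≤ C.card + m := (Finset.card_union_le _ _).trans
          (add_le_add Finset.card_image_le (Finset.card_image_le.trans_eq (by simp)))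
      _ ≤ (3 * m + 1) / 2 := by omega
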